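/- arXiv:2210.16082 — 2 statements merged into one kernel-verified Lean document; each statement's English description precedes it below -/
import Mathlib

section
/- Let f, g be admissible circle densities with cumulative distribution functions F, G and define I(α) = ∫₀¹ (F⁻¹(t) − G⁻¹(t − α))² dt. Then I is twice differentiable at every α ∈ ℝ and I″(α) = 2 ∫₀¹ dt / f(F⁻¹(G(t) + α)) = 2 ∫₀¹ dt / g(G⁻¹(F(t) − α)); in particular I″(α) > 0. -/
/-!
Differentiating under the integral sign gives
`I'(α) = 2 ∫₀¹ (F⁻¹ t - G⁻¹ (t - α)) (G⁻¹)'(t - α) dt`,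
which still involves the derivative `1 / g ∘ G⁻¹`. The substitution `t = G s + α` removes it:
`I'(α) = 2 ∫₀¹ (F⁻¹ (G s + α) - s) ds`,
and this can be differentiated once more, with `(F⁻¹)' = 1 / f ∘ F⁻¹`. The second expression
for `I''` is the substitution `t = F⁻¹ (G u + α)`. Both substitutions may be made over a single
period because `F`, `G` and their inverses commute with `· + 1`, so the integrands are
`1`-periodic.
-/

open MeasureTheory Set Function

theorem hasDerivAt_intervalIntegral_of_continuous_deriv {E : Type*} [NormedAddCommGroup E]
    [NormedSpace ℝ E] {F F' : ℝ → ℝ → E} {a b : ℝ} (hF : ∀ x, Continuous (F x))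
    (hF' : Continuous (uncurry F')) (hderiv : ∀ x t, HasDerivAt (F · t) (F' x t) x)
    (x₀ : ℝ) :
    HasDerivAt (fun x => ∫ t in a..b, F x t) (∫ t in a..b, F' x₀ t) x₀ := by
  obtain ⟨C, hC⟩ := ((isCompact_closedBall x₀ 1).prod (isCompact_uIcc (a := a) (b := b))
    ).exists_bound_of_continuousOn hF'.continuousOn
  refine (intervalIntegral.hasDerivAt_integral_of_dominated_loc_of_deriv_le (bound := fun _ => C)
    (Metric.ball_mem_nhds x₀ one_pos) (.of_forall fun x => (hF x).aestronglyMeasurable)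
    ((hF x₀).intervalIntegrable a b) (hF'.comp (.prodMk_right x₀)).aestronglyMeasurable
    (ae_of_all _ fun t ht x hx =>
      hC (x, t) ⟨Metric.ball_subset_closedBall hx, uIoc_subset_uIcc ht⟩)
    intervalIntegrable_const (ae_of_all _ fun t _ x _ => hderiv x t)).2

theorem intervalIntegral_comp_mul_deriv_of_periodic {φ φ' h : ℝ → ℝ} {p : ℝ}
    (hφ : ∀ u, HasDerivAt φ (φ' u) u) (hφ' : Continuous φ')
    (hφp : ∀ u, φ (u + p) = φ u + p) (hh : Continuous h) (hhp : Periodic h p) :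
    ∫ u in (0:ℝ)..p, h (φ u) * φ' u = ∫ t in (0:ℝ)..p, h t := by
  have := intervalIntegral.integral_comp_mul_deriv (a := 0) (b := p) (fun u _ => hφ u)
    hφ'.continuousOn hh
  rw [comp_def] at this
  rw [this, ← zero_add p, hφp, hhp.intervalIntegral_add_eq]

structure IsAdmissibleCDF (f F Finv : ℝ → ℝ) : Prop where
  continuous_density : Continuous f
  density_pos : ∀ t, 0 < f t
  hasDerivAt : ∀ t, HasDerivAt F (f t) t
  add_one : ∀ t, F (t + 1) = F t + 1
  leftInverse : LeftInverse Finv F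
  rightInverse : RightInverse Finv F

namespace IsAdmissibleCDF

variable {f F Finv : ℝ → ℝ}

theorem of_intervalIntegral (hfc : Continuous f) (hfp : Periodic f 1) (hf : ∀ t, 0 < f t)
    (hfm : ∫ t in (0:ℝ)..1, f t = 1) (hF : ∀ t, F t = ∫ τ in (0:ℝ)..t, f τ)
    (hF₁ : LeftInverse Finv F) (hF₂ : RightInverse Finv F) : IsAdmissibleCDF f F Finv where
  continuous_density := hfc
  density_pos := hf
  hasDerivAt t := by
    rw [show F = fun t => ∫ τ in (0:ℝ)..t, f τ from funext hF]
    exact (hfc.integral_hasStrictDerivAt 0 t).hasDerivAt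
  add_one t := by
    rw [hF, hF, hfp.intervalIntegral_add_eq_add 0 t fun _ _ => hfc.intervalIntegrable _ _,
      zero_add, hfm]
  leftInverse := hF₁
  rightInverse := hF₂

theorem periodic_density (hF : IsAdmissibleCDF f F Finv) : Periodic f 1 := fun t =>
  ((hF.hasDerivAt (t + 1)).comp_add_const t 1).unique <| by
    simpa only [hF.add_one] using (hF.hasDerivAt t).add_const 1

theorem continuous (hF : IsAdmissibleCDF f F Finv) : Continuous F :=
  continuous_iff_continuousAt.2 fun t => (hF.hasDerivAt t).continuousAt

theorem strictMono (hF : IsAdmissibleCDF f F Finv) : StrictMono F :=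
  strictMono_of_hasDerivAt_pos hF.hasDerivAt hF.density_pos

theorem continuous_inv (hF : IsAdmissibleCDF f F Finv) : Continuous Finv :=
  Monotone.continuous_of_surjective
    (fun x y hxy => hF.strictMono.le_iff_le.1 (by rwa [hF.rightInverse, hF.rightInverse]))
    hF.leftInverse.surjective

theorem hasDerivAt_inv (hF : IsAdmissibleCDF f F Finv) (x : ℝ) :
    HasDerivAt Finv (1 / f (Finv x)) x := by
  rw [one_div]
  exact (hF.hasDerivAt (Finv x)).of_local_left_inverse hF.continuous_inv.continuousAt
    (hF.density_pos _).ne' (.of_forall hF.rightInverse)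

theorem inv_add_one (hF : IsAdmissibleCDF f F Finv) (x : ℝ) : Finv (x + 1) = Finv x + 1 :=
  Semiconj.inverse_left (ga := (· + 1)) (gb := (· + 1)) hF.add_one hF.leftInverse
    hF.rightInverse x

theorem continuous_one_div_density_comp (hF : IsAdmissibleCDF f F Finv) {X : Type*}
    [TopologicalSpace X] {φ : X → ℝ} (hφ : Continuous φ) :
    Continuous fun x => 1 / f (φ x) :=
  continuous_const.div (hF.continuous_density.comp hφ) fun _ => (hF.density_pos _).ne'

theorem intervalIntegral_one_div_density_comp_pos (hF : IsAdmissibleCDF f F Finv) {φ : ℝ → ℝ}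
    (hφ : Continuous φ) {a b : ℝ} (hab : a < b) : 0 < ∫ t in a..b, 1 / f (φ t) :=
  intervalIntegral.intervalIntegral_pos_of_pos_on
    ((hF.continuous_one_div_density_comp hφ).intervalIntegrable a b)
    (fun _ _ => one_div_pos.2 (hF.density_pos _)) hab

end IsAdmissibleCDF

theorem hasDerivAt_intervalIntegral_sq_sub_comp_sub {φ ψ ψ' : ℝ → ℝ} {a b : ℝ}
    (hφ : Continuous φ) (hψ : ∀ x, HasDerivAt ψ (ψ' x) x) (hψ' : Continuous ψ')
    (α : ℝ) :
    HasDerivAt (fun α => ∫ t in a..b, (φ t - ψ (t - α)) ^ 2)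
      (∫ t in a..b, 2 * (φ t - ψ (t - α)) * ψ' (t - α)) α := by
  have hψc : Continuous ψ := continuous_iff_continuousAt.2 fun x => (hψ x).continuousAt
  refine hasDerivAt_intervalIntegral_of_continuous_deriv
    (F' := fun α t => 2 * (φ t - ψ (t - α)) * ψ' (t - α)) (fun α => by fun_prop)
    (by fun_prop) (fun α t => ?_) α
  refine ((((hψ (t - α)).comp α ((hasDerivAt_id' α).const_sub t)).const_sub (φ t)).fun_pow 2
    ).congr_deriv ?_
  simp only [comp_apply]
  ring

section Transport

variable {f g F G Finv Ginv : ℝ → ℝ}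

theorem intervalIntegral_transportCost_deriv_eq_displacement (hf : IsAdmissibleCDF f F Finv)
    (hg : IsAdmissibleCDF g G Ginv) (α : ℝ) :
    ∫ t in (0:ℝ)..1, 2 * (Finv t - Ginv (t - α)) * (1 / g (Ginv (t - α)))
      = 2 * ∫ s in (0:ℝ)..1, (Finv (G s + α) - s) := by
  have hGinv : Continuous fun t => Ginv (t - α) := hg.continuous_inv.comp (continuous_sub_right α)
  have key := intervalIntegral_comp_mul_deriv_of_periodic (p := 1) (φ := fun s => G s + α)
    (h := fun t => 2 * (Finv t - Ginv (t - α)) * (1 / g (Ginv (t - α))))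
    (fun s => (hg.hasDerivAt s).add_const α) hg.continuous_density
    (fun s => by rw [hg.add_one]; ring)
    ((continuous_const.mul (hf.continuous_inv.sub hGinv)).mul
      (hg.continuous_one_div_density_comp hGinv))
    (fun t => by
      simp only [add_sub_right_comm t 1 α, hf.inv_add_one, hg.inv_add_one,
        hg.periodic_density (Ginv (t - α))]
      ring)
  rw [← key, ← intervalIntegral.integral_const_mul]
  refine intervalIntegral.integral_congr fun s _ => ?_
  simp only [add_sub_cancel_right, hg.leftInverse s]
  field_simp [(hg.density_pos s).ne']

theorem hasDerivAt_transportCost (hf : IsAdmissibleCDF f F Finv)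
    (hg : IsAdmissibleCDF g G Ginv) (α : ℝ) :
    HasDerivAt (fun α => ∫ t in (0:ℝ)..1, (Finv t - Ginv (t - α)) ^ 2)
      (2 * ∫ s in (0:ℝ)..1, (Finv (G s + α) - s)) α :=
  intervalIntegral_transportCost_deriv_eq_displacement hf hg α ▸
    hasDerivAt_intervalIntegral_sq_sub_comp_sub hf.continuous_inv hg.hasDerivAt_inv
      (hg.continuous_one_div_density_comp hg.continuous_inv) α

theorem hasDerivAt_intervalIntegral_displacement (hf : IsAdmissibleCDF f F Finv)
    (hg : IsAdmissibleCDF g G Ginv) (α : ℝ) :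
    HasDerivAt (fun α => ∫ s in (0:ℝ)..1, (Finv (G s + α) - s))
      (∫ s in (0:ℝ)..1, 1 / f (Finv (G s + α))) α :=
  have := hf.continuous_inv
  have := hg.continuous
  hasDerivAt_intervalIntegral_of_continuous_deriv (F := fun α s => Finv (G s + α) - s)
    (F' := fun α s => 1 / f (Finv (G s + α))) (fun α => by fun_prop)
    (hf.continuous_one_div_density_comp
      (by fun_prop : Continuous fun p : ℝ × ℝ => Finv (G p.2 + p.1)))
    (fun α s => by
      simpa only [mul_one, comp_apply] using
        ((hf.hasDerivAt_inv _).comp α ((hasDerivAt_id' α).const_add (G s))).sub_const s)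
    α

theorem intervalIntegral_one_div_density_comp_symm (hf : IsAdmissibleCDF f F Finv)
    (hg : IsAdmissibleCDF g G Ginv) (α : ℝ) :
    ∫ t in (0:ℝ)..1, 1 / f (Finv (G t + α))
      = ∫ t in (0:ℝ)..1, 1 / g (Ginv (F t - α)) := by
  have := hf.continuous_inv
  have := hg.continuous
  have key := intervalIntegral_comp_mul_deriv_of_periodic (p := 1) (φ := fun u => Finv (G u + α))
    (φ' := fun u => 1 / f (Finv (G u + α)) * g u) (h := fun t => 1 / g (Ginv (F t - α)))
    (fun u => (hf.hasDerivAt_inv _).comp u ((hg.hasDerivAt u).add_const α))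
    ((hf.continuous_one_div_density_comp (by fun_prop)).mul hg.continuous_density)
    (fun u => by simp only [hg.add_one, add_right_comm _ 1 α, hf.inv_add_one])
    (hg.continuous_one_div_density_comp
      (hg.continuous_inv.comp (hf.continuous.sub continuous_const)))
    (fun t => by
      simp only [hf.add_one, add_sub_right_comm _ 1 α, hg.inv_add_one,
        hg.periodic_density (Ginv (F t - α))])
  rw [← key]
  refine intervalIntegral.integral_congr fun u _ => ?_
  simp only [hf.rightInverse _, add_sub_cancel_right, hg.leftInverse u]
  field_simp [(hg.density_pos u).ne']

end Transport

/-- I is twice differentiable with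
I″(α) = 2 ∫₀¹ dt / f(F⁻¹(G(t) + α)) = 2 ∫₀¹ dt / g(G⁻¹(F(t) − α)) > 0. -/
theorem I_second_derivative
    (f g F G Finv Ginv : ℝ → ℝ) (η : ℝ) (hη : 0 < η)
    (hfc : Continuous f) (hgc : Continuous g)
    (hfp : Function.Periodic f 1) (hgp : Function.Periodic g 1)
    (hfl : ∀ t, η ≤ f t) (hgl : ∀ t, η ≤ g t)
    (hfm : (∫ t in (0:ℝ)..1, f t) = 1) (hgm : (∫ t in (0:ℝ)..1, g t) = 1)
    (hF : ∀ t, F t = ∫ τ in (0:ℝ)..t, f τ) (hG : ∀ t, G t = ∫ τ in (0:ℝ)..t, g τ)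
    (hF₁ : Function.LeftInverse Finv F) (hF₂ : Function.RightInverse Finv F)
    (hG₁ : Function.LeftInverse Ginv G) (hG₂ : Function.RightInverse Ginv G)
    (I : ℝ → ℝ) (hI : ∀ α, I α = ∫ t in (0:ℝ)..1, (Finv t - Ginv (t - α)) ^ 2) :
    (∀ α : ℝ, DifferentiableAt ℝ I α) ∧
      ∀ α : ℝ,
        HasDerivAt (deriv I) (2 * ∫ t in (0:ℝ)..1, 1 / f (Finv (G t + α))) α ∧
        (2 * ∫ t in (0:ℝ)..1, 1 / f (Finv (G t + α)))
          = (2 * ∫ t in (0:ℝ)..1, 1 / g (Ginv (F t - α))) ∧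
        (0 < 2 * ∫ t in (0:ℝ)..1, 1 / f (Finv (G t + α))) := by
  have hf := IsAdmissibleCDF.of_intervalIntegral hfc hfp (fun t => hη.trans_le (hfl t)) hfm hF
    hF₁ hF₂
  have hg := IsAdmissibleCDF.of_intervalIntegral hgc hgp (fun t => hη.trans_le (hgl t)) hgm hG
    hG₁ hG₂
  have hI' : ∀ α, HasDerivAt I (2 * ∫ s in (0:ℝ)..1, (Finv (G s + α) - s)) α := by
    rw [show I = _ from funext hI]
    exact hasDerivAt_transportCost hf hg
  have hI'_eq : deriv I = fun α => 2 * ∫ s in (0:ℝ)..1, (Finv (G s + α) - s) :=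
    funext fun α => (hI' α).deriv
  refine ⟨fun α => (hI' α).differentiableAt, fun α => ⟨?_, ?_, ?_⟩⟩
  · rw [hI'_eq]
    exact (hasDerivAt_intervalIntegral_displacement hf hg α).const_mul 2
  · rw [intervalIntegral_one_div_density_comp_symm hf hg]
  · have hGα : Continuous fun t => Finv (G t + α) :=
      hf.continuous_inv.comp (hg.continuous.add continuous_const)
    exact mul_pos two_pos (hf.intervalIntegral_one_div_density_comp_pos hGα zero_lt_one)
end

section
/- Let f, g be admissible circle densities with cumulative distribution functions F, G and define I(α) = ∫₀¹ (F⁻¹(t) − G⁻¹(t − α))² dt. Then I attains its global minimum over ℝ at a unique point α*, and this minimizer satisfies α* ∈ (−1, 1). -/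
open MeasureTheory Set Function

/-!
Substituting `t = G s + α` turns `I'(α) / 2` into the mean displacement
`J(α) = ∫₀¹ (F⁻¹(G s + α) - s) ds`. Since `F⁻¹` is strictly increasing, so is `J`; and since
`F⁻¹ ∘ G` maps `[0, 1]` into itself and `F⁻¹` commutes with translation by `1`,
`J(-1) < 0 < J(1)`. Hence `I'` has a unique zero `α* ∈ (-1, 1)`, where `I` changes from
strictly decreasing to strictly increasing.
-/

section Primitive

variable {f F : ℝ → ℝ}

theorem hasDerivAt_of_eq_primitive (hfc : Continuous f)
    (hF : ∀ t, F t = ∫ τ in (0:ℝ)..t, f τ) (t : ℝ) : HasDerivAt F (f t) t :=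
  (hfc.integral_hasStrictDerivAt 0 t).hasDerivAt.congr_of_eventuallyEq (.of_forall hF)

theorem add_one_of_eq_primitive (hfc : Continuous f) (hfp : Periodic f 1)
    (hfm : ∫ t in (0:ℝ)..1, f t = 1) (hF : ∀ t, F t = ∫ τ in (0:ℝ)..t, f τ) (t : ℝ) :
    F (t + 1) = F t + 1 := by
  rw [hF, hF, hfp.intervalIntegral_add_eq_add 0 t fun _ _ => hfc.intervalIntegrable _ _,
    zero_add, hfm]

theorem add_one_of_rightInverse {Φ : ℝ → ℝ} (hFi : Injective F)
    (hF1 : ∀ t, F (t + 1) = F t + 1) (hΦ : RightInverse Φ F) (y : ℝ) :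
    Φ (y + 1) = Φ y + 1 :=
  hFi (by rw [hF1, hΦ, hΦ])

end Primitive

theorem hasDerivAt_intervalIntegral_of_continuous {F F' : ℝ → ℝ → ℝ}
    (hF : ∀ x, Continuous (F x)) (hF' : Continuous (uncurry F'))
    (hFF' : ∀ x t, HasDerivAt (F · t) (F' x t) x) (a b x₀ : ℝ) :
    HasDerivAt (fun x => ∫ t in a..b, F x t) (∫ t in a..b, F' x₀ t) x₀ := by
  -- A jointly continuous `F'` is bounded on the compact set `closedBall x₀ 1 ×ˢ [a, b]`.
  obtain ⟨C, hC⟩ := ((isCompact_closedBall x₀ 1).prod isCompact_uIcc).exists_bound_of_continuousOn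
    (hF'.continuousOn (s := Metric.closedBall x₀ 1 ×ˢ uIcc a b))
  refine (intervalIntegral.hasDerivAt_integral_of_dominated_loc_of_deriv_le (bound := fun _ => C)
    (Metric.ball_mem_nhds x₀ one_pos) (.of_forall fun x => (hF x).aestronglyMeasurable)
    ((hF x₀).intervalIntegrable _ _) (hF'.uncurry_left x₀).aestronglyMeasurable
    (ae_of_all _ fun t ht x hx => hC (x, t) ⟨Metric.ball_subset_closedBall hx, uIoc_subset_uIcc ht⟩)
    intervalIntegrable_const (ae_of_all _ fun t _ x _ => hFF' x t)).2

theorem forall_le_iff_eq_of_hasDerivAt_of_strictMono {φ φ' : ℝ → ℝ}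
    (hφ : ∀ x, HasDerivAt φ (φ' x) x) (hφ' : StrictMono φ') {a : ℝ} (ha : φ' a = 0) (b : ℝ) :
    (∀ x, φ b ≤ φ x) ↔ b = a := by
  have hcont : Continuous φ := continuous_iff_continuousAt.2 fun x => (hφ x).continuousAt
  have hlt : ∀ x ≠ a, φ a < φ x := fun x hx => by
    rcases hx.lt_or_gt with hxa | hax
    · refine strictAntiOn_of_deriv_neg (convex_Iic a) hcont.continuousOn (fun y hy => ?_)
        (mem_Iic.2 hxa.le) self_mem_Iic hxa
      rw [interior_Iic] at hy
      rw [(hφ y).deriv, ← ha]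
      exact hφ' hy
    · refine strictMonoOn_of_deriv_pos (convex_Ici a) hcont.continuousOn (fun y hy => ?_)
        self_mem_Ici (mem_Ici.2 hax.le) hax
      rw [interior_Ici] at hy
      rw [(hφ y).deriv, ← ha]
      exact hφ' hy
  refine ⟨fun hb => by_contra fun h => (hlt b h).not_ge (hb a), ?_⟩
  rintro rfl x
  rcases eq_or_ne x b with rfl | h
  exacts [le_rfl, (hlt x h).le]

section MeanDisplacement

variable {Φ G : ℝ → ℝ}

noncomputable def meanDisplacement (Φ G : ℝ → ℝ) (α : ℝ) : ℝ :=
  ∫ s in (0:ℝ)..1, (Φ (G s + α) - s)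

theorem continuous_meanDisplacement (hΦ : Continuous Φ) (hG : Continuous G) :
    Continuous (meanDisplacement Φ G) :=
  intervalIntegral.continuous_parametric_intervalIntegral_of_continuous' (by fun_prop) 0 1

theorem meanDisplacement_add_one (hΦ : Continuous Φ) (hG : Continuous G)
    (hΦ1 : ∀ y, Φ (y + 1) = Φ y + 1) (α : ℝ) :
    meanDisplacement Φ G (α + 1) = meanDisplacement Φ G α + 1 := by
  have h : ∀ s, Φ (G s + (α + 1)) - s = (Φ (G s + α) - s) + 1 := fun s => by
    rw [← add_assoc, hΦ1]; ring
  simp only [meanDisplacement, h]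
  rw [intervalIntegral.integral_add (by apply Continuous.intervalIntegrable; fun_prop)
    intervalIntegrable_const]
  simp

theorem strictMono_meanDisplacement (hΦ : StrictMono Φ) (hΦc : Continuous Φ)
    (hG : Continuous G) : StrictMono (meanDisplacement Φ G) := fun α β hαβ =>
  intervalIntegral.integral_lt_integral_of_continuousOn_of_le_of_exists_lt zero_lt_one
    (by fun_prop) (by fun_prop) (fun s _ => by gcongr; exact hΦ.monotone (by linarith))
    ⟨0, by simp, by gcongr; exact hΦ (by linarith)⟩

theorem abs_meanDisplacement_zero_le (hΦ : Monotone Φ) (hG : Monotone G)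
    (hΦc : Continuous Φ) (hGc : Continuous G) (hΦ1 : ∀ y, Φ (y + 1) = Φ y + 1)
    (hG1 : ∀ s, G (s + 1) = G s + 1) (hΦG : Φ (G 0) = 0) :
    |meanDisplacement Φ G 0| ≤ 1 / 2 := by
  have hΦG1 : Φ (G 1) = 1 := by rw [← zero_add (1:ℝ), hG1, hΦ1, hΦG]
  have hlow : ∫ s in (0:ℝ)..1, -s ≤ meanDisplacement Φ G 0 := by
    refine intervalIntegral.integral_mono_on zero_le_one (continuous_neg.intervalIntegrable _ _)
      (by apply Continuous.intervalIntegrable; fun_prop) fun s hs => ?_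
    have := hΦ (hG hs.1)
    simp only [add_zero]; linarith
  have hup : meanDisplacement Φ G 0 ≤ ∫ s in (0:ℝ)..1, (1 - s) := by
    refine intervalIntegral.integral_mono_on zero_le_one
      (by apply Continuous.intervalIntegrable; fun_prop)
      ((continuous_sub_left 1).intervalIntegrable _ _) fun s hs => ?_
    have := hΦ (hG hs.2)
    simp only [add_zero]; linarith
  rw [intervalIntegral.integral_neg, integral_id] at hlow
  rw [intervalIntegral.integral_sub intervalIntegrable_const intervalIntegral.intervalIntegrable_id,
    integral_id, intervalIntegral.integral_const] at hup
  norm_num at hlow hup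
  exact abs_le.2 ⟨by linarith, by linarith⟩

theorem exists_meanDisplacement_eq_zero (hΦ : Monotone Φ) (hG : Monotone G)
    (hΦc : Continuous Φ) (hGc : Continuous G) (hΦ1 : ∀ y, Φ (y + 1) = Φ y + 1)
    (hG1 : ∀ s, G (s + 1) = G s + 1) (hΦG : Φ (G 0) = 0) :
    ∃ α ∈ Ioo (-1 : ℝ) 1, meanDisplacement Φ G α = 0 := by
  have h0 := abs_le.1 (abs_meanDisplacement_zero_le hΦ hG hΦc hGc hΦ1 hG1 hΦG)
  have h1 := meanDisplacement_add_one hΦc hGc hΦ1 0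
  have hm1 := meanDisplacement_add_one hΦc hGc hΦ1 (-1)
  norm_num at h1 hm1
  exact intermediate_value_Ioo (by norm_num) (continuous_meanDisplacement hΦc hGc).continuousOn
    ⟨by linarith, by linarith⟩

end MeanDisplacement

section TransportCost

variable {Φ G Ψ g : ℝ → ℝ}

theorem integral_div_density_eq_meanDisplacement (hΦ : Continuous Φ)
    (hΦ1 : ∀ y, Φ (y + 1) = Φ y + 1) (hG : ∀ s, HasDerivAt G (g s) s) (hgc : Continuous g)
    (hg : ∀ s, g s ≠ 0) (hG1 : ∀ s, G (s + 1) = G s + 1) (hΨc : Continuous Ψ)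
    (hΨl : LeftInverse Ψ G) (hΨr : RightInverse Ψ G) (α : ℝ) :
    ∫ t in (0:ℝ)..1, (Φ t - Ψ (t - α)) / g (Ψ (t - α)) = meanDisplacement Φ G α := by
  -- `s ↦ G s + α` maps one period `[c, c + 1]` onto `[0, 1]`.
  set c := Ψ (-α)
  have hsubst := intervalIntegral.integral_comp_mul_deriv (a := c) (b := c + 1)
    (f := fun s => G s + α) (g := fun t => (Φ t - Ψ (t - α)) / g (Ψ (t - α)))
    (fun s _ => (hG s).add_const α) hgc.continuousOn
    (by fun_prop (disch := exact fun _ => hg _))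
  have hends : G c + α = 0 ∧ G (c + 1) + α = 1 := by
    rw [hG1, hΨr]; constructor <;> ring
  have hsimp : ∀ s, (Φ (G s + α) - Ψ (G s + α - α)) / g (Ψ (G s + α - α)) * g s =
      Φ (G s + α) - s := fun s => by
    rw [add_sub_cancel_right, hΨl, div_mul_cancel₀ _ (hg s)]
  have hper : Periodic (fun s => Φ (G s + α) - s) 1 := fun s => by
    simp only [hG1, add_right_comm _ (1:ℝ), hΦ1]; ring
  simp only [comp_apply, hsimp, hends.1, hends.2] at hsubst
  rw [← hsubst, hper.intervalIntegral_add_eq c 0, zero_add, meanDisplacement]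

theorem hasDerivAt_integral_sq_sub_comp_sub (hΦ : Continuous Φ)
    (hΦ1 : ∀ y, Φ (y + 1) = Φ y + 1) (hG : ∀ s, HasDerivAt G (g s) s) (hgc : Continuous g)
    (hg : ∀ s, g s ≠ 0) (hG1 : ∀ s, G (s + 1) = G s + 1) (hΨc : Continuous Ψ)
    (hΨl : LeftInverse Ψ G) (hΨr : RightInverse Ψ G) (α : ℝ) :
    HasDerivAt (fun α => ∫ t in (0:ℝ)..1, (Φ t - Ψ (t - α)) ^ 2)
      (2 * meanDisplacement Φ G α) α := by
  have hΨ : ∀ y, HasDerivAt Ψ (g (Ψ y))⁻¹ y := fun y =>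
    .of_local_left_inverse hΨc.continuousAt (hG (Ψ y)) (hg _) (.of_forall hΨr)
  have hpointwise : ∀ x t, HasDerivAt (fun x => (Φ t - Ψ (t - x)) ^ 2)
      (2 * ((Φ t - Ψ (t - x)) / g (Ψ (t - x)))) x := fun x t => by
    have hinner : HasDerivAt (fun x => Ψ (t - x)) ((g (Ψ (t - x)))⁻¹ * -1) x :=
      (hΨ (t - x)).comp x ((hasDerivAt_id x).const_sub t)
    exact ((hinner.const_sub (Φ t)).fun_pow 2).congr_deriv (by simp only [div_eq_mul_inv]; ring)
  have := hasDerivAt_intervalIntegral_of_continuous (by fun_prop)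
    (by fun_prop (disch := exact fun _ => hg _)) hpointwise 0 1 α
  rwa [intervalIntegral.integral_const_mul,
    integral_div_density_eq_meanDisplacement hΦ hΦ1 hG hgc hg hG1 hΨc hΨl hΨr] at this

end TransportCost

theorem I_unique_minimizer_in_Ioo_general
    (f g F G Finv Ginv : ℝ → ℝ) (η : ℝ) (hη : 0 < η)
    (hfc : Continuous f) (hgc : Continuous g)
    (hfp : Function.Periodic f 1) (hgp : Function.Periodic g 1)
    (hfl : ∀ t, η ≤ f t) (hgl : ∀ t, η ≤ g t)
    (hfm : (∫ t in (0:ℝ)..1, f t) = 1) (hgm : (∫ t in (0:ℝ)..1, g t) = 1)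
    (hF : ∀ t, F t = ∫ τ in (0:ℝ)..t, f τ) (hG : ∀ t, G t = ∫ τ in (0:ℝ)..t, g τ)
    (hF₂ : Function.RightInverse Finv F)
    (hG₂ : Function.RightInverse Ginv G)
    (I : ℝ → ℝ) (hI : ∀ α, I α = ∫ t in (0:ℝ)..1, (Finv t - Ginv (t - α)) ^ 2) :
    ∃ αs : ℝ, αs ∈ Set.Ioo (-1 : ℝ) 1 ∧ (∀ α : ℝ, I αs ≤ I α) ∧
      ∀ β : ℝ, (∀ α : ℝ, I β ≤ I α) → β = αs := by
  have hFd := hasDerivAt_of_eq_primitive hfc hF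
  have hGd := hasDerivAt_of_eq_primitive hgc hG
  have hF1 := add_one_of_eq_primitive hfc hfp hfm hF
  have hG1 := add_one_of_eq_primitive hgc hgp hgm hG
  have hgne : ∀ t, g t ≠ 0 := fun t => (hη.trans_le (hgl t)).ne'
  let eF := (strictMono_of_hasDerivAt_pos hFd fun t => hη.trans_le (hfl t)).orderIsoOfRightInverse
    F Finv hF₂
  let eG := (strictMono_of_hasDerivAt_pos hGd fun t => hη.trans_le (hgl t)).orderIsoOfRightInverse
    G Ginv hG₂
  have hFinv : StrictMono Finv := eF.symm.strictMono
  have hFinvc : Continuous Finv := eF.symm.continuous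
  have hGmono : Monotone G := eG.monotone
  have hGc : Continuous G := eG.continuous
  have hGinvc : Continuous Ginv := eG.symm.continuous
  have hGinvl : LeftInverse Ginv G := eG.symm_apply_apply
  have hFinv1 := add_one_of_rightInverse eF.injective hF1 hF₂
  have hFinvG0 : Finv (G 0) = 0 := by
    rw [show G 0 = F 0 by simp [hF, hG]]
    exact eF.symm_apply_apply 0
  obtain ⟨αs, hαs, hJ⟩ :=
    exists_meanDisplacement_eq_zero hFinv.monotone hGmono hFinvc hGc hFinv1 hG1 hFinvG0
  have hI' : ∀ α, HasDerivAt I (2 * meanDisplacement Finv G α) α := fun α =>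
    (hasDerivAt_integral_sq_sub_comp_sub hFinvc hFinv1 hGd hgc hgne hG1 hGinvc hGinvl hG₂
      α).congr_of_eventuallyEq (.of_forall hI)
  have hmin := forall_le_iff_eq_of_hasDerivAt_of_strictMono hI'
    ((strictMono_meanDisplacement hFinv hFinvc hGc).const_mul two_pos) (by rw [hJ, mul_zero])
  exact ⟨αs, hαs, (hmin αs).2 rfl, fun β => (hmin β).1⟩

/-- I attains its global minimum at a unique point α*, and α* ∈ (−1, 1). -/
theorem I_unique_minimizer_in_Ioo
    (f g F G Finv Ginv : ℝ → ℝ) (η : ℝ) (hη : 0 < η)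
    (hfc : Continuous f) (hgc : Continuous g)
    (hfp : Function.Periodic f 1) (hgp : Function.Periodic g 1)
    (hfl : ∀ t, η ≤ f t) (hgl : ∀ t, η ≤ g t)
    (hfm : (∫ t in (0:ℝ)..1, f t) = 1) (hgm : (∫ t in (0:ℝ)..1, g t) = 1)
    (hF : ∀ t, F t = ∫ τ in (0:ℝ)..t, f τ) (hG : ∀ t, G t = ∫ τ in (0:ℝ)..t, g τ)
    (hF₁ : Function.LeftInverse Finv F) (hF₂ : Function.RightInverse Finv F)
    (hG₁ : Function.LeftInverse Ginv G) (hG₂ : Function.RightInverse Ginv G)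
    (I : ℝ → ℝ) (hI : ∀ α, I α = ∫ t in (0:ℝ)..1, (Finv t - Ginv (t - α)) ^ 2) :
    ∃ αs : ℝ, αs ∈ Set.Ioo (-1 : ℝ) 1 ∧ (∀ α : ℝ, I αs ≤ I α) ∧
      ∀ β : ℝ, (∀ α : ℝ, I β ≤ I α) → β = αs :=
  I_unique_minimizer_in_Ioo_general f g F G Finv Ginv η hη hfc hgc hfp hgp hfl hgl hfm hgm hF hG hF₂
    hG₂ I hI
end
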